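/- If f, g ∈ H²₂(𝔻) then fg ∈ H²₂(𝔻) and ‖fg‖_{H²₂} ≤ 2√2 · √(ζ(4) − ζ(5)) · ‖f‖_{H²₂} · ‖g‖_{H²₂}. -/

import Mathlib

/-- Membership in `H²₂(𝔻)` in terms of Taylor coefficients:
`∑ (n+2)⁵/(n+1)|aₙ|² < ∞`. -/
def Hmem (a : ℕ → ℂ) : Prop :=
  Summable (fun n : ℕ => ((n : ℝ) + 2) ^ 5 / ((n : ℝ) + 1) * ‖a n‖ ^ 2)

/-- The squared `H²₂` norm `∑ (n+2)⁵/(n+1)|aₙ|²`. -/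
noncomputable def hnorm2 (a : ℕ → ℂ) : ℝ :=
  ∑' n : ℕ, ((n : ℝ) + 2) ^ 5 / ((n : ℝ) + 1) * ‖a n‖ ^ 2

/-- Taylor coefficients of the product `fg` (Cauchy product). -/
noncomputable def cmul (a b : ℕ → ℂ) : ℕ → ℂ := fun n => ∑ k ∈ Finset.range (n + 1), a k * b (n - k)

/-! Cauchy–Schwarz on the `n`-th coefficient of `fg`, with weights `w k = (k+2)⁵/(k+1)`, gives
`w n |cₙ|² ≤ (w n ∑ₖ (w k)⁻¹ (w (n-k))⁻¹) · ∑ₖ w k |aₖ|² · w (n-k) |b_{n-k}|²`; summing over `n`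
(a Cauchy product of absolutely convergent series) reduces the theorem to a uniform bound on
`w n ∑ₖ (w k)⁻¹ (w (n-k))⁻¹`. For `k ≤ n - k` the summand is at most
`11 (1/(k+4)³ - 1/(k+5)³)`, which telescopes, so the bound is `22/64 = 11/32`; and already the
first terms of `8 (ζ(4) - ζ(5)) = 8 ∑ (1/n⁴ - 1/n⁵)` exceed `11/32`. -/

open Finset

section WeightedCauchyProduct

variable {w : ℕ → ℝ}

lemma norm_cmul_sq_le (hw : ∀ n, 0 < w n) (a b : ℕ → ℂ) (n : ℕ) :
    ‖cmul a b n‖ ^ 2 ≤ (∑ k ∈ range (n + 1), (w k)⁻¹ * (w (n - k))⁻¹) *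
      ∑ k ∈ range (n + 1), w k * ‖a k‖ ^ 2 * (w (n - k) * ‖b (n - k)‖ ^ 2) := by
  have hsum : ‖cmul a b n‖ ≤ ∑ k ∈ range (n + 1), ‖a k‖ * ‖b (n - k)‖ :=
    (norm_sum_le _ _).trans_eq (by simp only [norm_mul])
  refine (pow_le_pow_left₀ (norm_nonneg _) hsum 2).trans <|
    sum_sq_le_sum_mul_sum_of_sq_le_mul _
      (fun k _ => mul_nonneg (inv_nonneg.mpr (hw k).le) (inv_nonneg.mpr (hw (n - k)).le))
      (fun k _ => mul_nonneg (mul_nonneg (hw k).le (sq_nonneg _))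
        (mul_nonneg (hw (n - k)).le (sq_nonneg _)))
      fun k _ => le_of_eq ?_
  field_simp [(hw k).ne', (hw (n - k)).ne']

theorem summable_weighted_cmul_and_tsum_le (hw : ∀ n, 0 < w n) {C : ℝ}
    (hC : ∀ n, w n * ∑ k ∈ range (n + 1), (w k)⁻¹ * (w (n - k))⁻¹ ≤ C)
    {a b : ℕ → ℂ} (ha : Summable fun n => w n * ‖a n‖ ^ 2)
    (hb : Summable fun n => w n * ‖b n‖ ^ 2) :
    Summable (fun n => w n * ‖cmul a b n‖ ^ 2) ∧
      ∑' n, w n * ‖cmul a b n‖ ^ 2 ≤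
        C * ((∑' n, w n * ‖a n‖ ^ 2) * ∑' n, w n * ‖b n‖ ^ 2) := by
  have hnn : ∀ (c : ℕ → ℂ) n, 0 ≤ w n * ‖c n‖ ^ 2 := fun c n => by have := hw n; positivity
  have ha' : Summable fun n => ‖w n * ‖a n‖ ^ 2‖ := ha.norm
  have hb' : Summable fun n => ‖w n * ‖b n‖ ^ 2‖ := hb.norm
  have hab : Summable fun n =>
      ∑ k ∈ range (n + 1), w k * ‖a k‖ ^ 2 * (w (n - k) * ‖b (n - k)‖ ^ 2) :=
    (summable_norm_sum_mul_range_of_summable_norm ha' hb').of_norm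
  have hle : ∀ n, w n * ‖cmul a b n‖ ^ 2 ≤
      C * ∑ k ∈ range (n + 1), w k * ‖a k‖ ^ 2 * (w (n - k) * ‖b (n - k)‖ ^ 2) := fun n => by
    have hS := sum_nonneg fun k (_ : k ∈ range (n + 1)) => mul_nonneg (hnn a k) (hnn b (n - k))
    calc w n * ‖cmul a b n‖ ^ 2
        ≤ w n * ((∑ k ∈ range (n + 1), (w k)⁻¹ * (w (n - k))⁻¹) *
            ∑ k ∈ range (n + 1), w k * ‖a k‖ ^ 2 * (w (n - k) * ‖b (n - k)‖ ^ 2)) :=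
          mul_le_mul_of_nonneg_left (norm_cmul_sq_le hw a b n) (hw n).le
      _ ≤ C * ∑ k ∈ range (n + 1), w k * ‖a k‖ ^ 2 * (w (n - k) * ‖b (n - k)‖ ^ 2) := by
          rw [← mul_assoc]; exact mul_le_mul_of_nonneg_right (hC n) hS
  have hc := (hab.mul_left C).of_nonneg_of_le (hnn (cmul a b)) hle
  refine ⟨hc, ?_⟩
  rw [tsum_mul_tsum_eq_tsum_sum_range_of_summable_norm ha' hb', ← tsum_mul_left]
  exact hc.tsum_le_tsum hle (hab.mul_left C)

end WeightedCauchyProduct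

noncomputable def h22Weight (x : ℝ) : ℝ := (x + 2) ^ 5 / (x + 1)

lemma h22Weight_pos {x : ℝ} (hx : 0 ≤ x) : 0 < h22Weight x := by
  unfold h22Weight; positivity

lemma h22Weight_add_mul_inv_le {x y : ℝ} (hx : 0 ≤ x) (hxy : x ≤ y) :
    h22Weight (x + y) * (h22Weight y)⁻¹ ≤ 16 * ((x + 1) / (x + 2)) ^ 4 := by
  have hy : 0 ≤ y := hx.trans hxy
  have h₁ : (x + y + 2) * (y + 1) ≤ (y + 2) * (x + y + 1) := by nlinarith
  have h₂ : ((x + y + 2) * (x + 2)) ^ 4 ≤ (2 * (x + 1) * (y + 2)) ^ 4 :=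
    pow_le_pow_left₀ (by positivity) (by nlinarith) 4
  unfold h22Weight
  rw [inv_div, div_mul_div_comm, div_pow, ← mul_div_assoc,
    div_le_div_iff₀ (by positivity) (by positivity)]
  calc (x + y + 2) ^ 5 * (y + 1) * (x + 2) ^ 4
      = (x + y + 2) * (y + 1) * ((x + y + 2) * (x + 2)) ^ 4 := by ring
    _ ≤ (y + 2) * (x + y + 1) * (2 * (x + 1) * (y + 2)) ^ 4 :=
        mul_le_mul h₁ h₂ (by positivity) (by positivity)
    _ = 16 * (x + 1) ^ 4 * ((x + y + 1) * (y + 2) ^ 5) := by ring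

noncomputable def cubeTail (x : ℝ) : ℝ := ((x + 4) ^ 3)⁻¹

lemma cubeTail_sub_cubeTail_add_one_nonneg {x : ℝ} (hx : 0 ≤ x) :
    0 ≤ cubeTail x - cubeTail (x + 1) := by
  unfold cubeTail
  rw [sub_nonneg]
  gcongr
  linarith

lemma sixteen_mul_mul_h22Weight_inv_le {x : ℝ} (hx : 0 ≤ x) :
    16 * ((x + 1) / (x + 2)) ^ 4 * (h22Weight x)⁻¹ ≤ 11 * (cubeTail x - cubeTail (x + 1)) := by
  unfold h22Weight cubeTail
  rw [inv_div, div_pow, show x + 1 + 4 = x + 5 by ring,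
    inv_sub_inv (by positivity) (by positivity)]
  field_simp
  linarith [pow_nonneg hx 11, pow_nonneg hx 10, pow_nonneg hx 9, pow_nonneg hx 8,
      pow_nonneg hx 7, pow_nonneg hx 6, pow_nonneg hx 5, pow_nonneg hx 4,
      pow_nonneg hx 3, pow_nonneg hx 2, hx]

lemma h22Weight_mul_inv_mul_inv_le {x y : ℝ} (hx : 0 ≤ x) (hxy : x ≤ y) :
    h22Weight (x + y) * ((h22Weight x)⁻¹ * (h22Weight y)⁻¹) ≤
      11 * (cubeTail x - cubeTail (x + 1)) :=
  calc h22Weight (x + y) * ((h22Weight x)⁻¹ * (h22Weight y)⁻¹)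
      = h22Weight (x + y) * (h22Weight y)⁻¹ * (h22Weight x)⁻¹ := by ring
    _ ≤ 16 * ((x + 1) / (x + 2)) ^ 4 * (h22Weight x)⁻¹ :=
        mul_le_mul_of_nonneg_right (h22Weight_add_mul_inv_le hx hxy)
          (inv_nonneg.mpr (h22Weight_pos hx).le)
    _ ≤ 11 * (cubeTail x - cubeTail (x + 1)) := sixteen_mul_mul_h22Weight_inv_le hx

lemma sum_range_cubeTail_sub_le (n : ℕ) :
    ∑ k ∈ range n, (cubeTail k - cubeTail (k + 1)) ≤ 1 / 64 := by
  have h := sum_range_sub' (fun k : ℕ => cubeTail k) n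
  push_cast at h
  have : 0 ≤ cubeTail n := by unfold cubeTail; positivity
  rw [h, show cubeTail 0 = 1 / 64 by norm_num [cubeTail]]
  linarith

lemma h22Weight_mul_sum_inv_mul_inv_le (n : ℕ) :
    h22Weight n * ∑ k ∈ range (n + 1), (h22Weight k)⁻¹ * (h22Weight (n - k : ℕ))⁻¹ ≤
      11 / 32 := by
  set d : ℕ → ℝ := fun k => cubeTail k - cubeTail (k + 1)
  have hd : ∀ k, 0 ≤ d k := fun k => cubeTail_sub_cubeTail_add_one_nonneg k.cast_nonneg
  have hterm : ∀ k ∈ range (n + 1),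
      h22Weight n * ((h22Weight k)⁻¹ * (h22Weight (n - k : ℕ))⁻¹) ≤ 11 * (d k + d (n - k)) := by
    intro k hk
    have hn : (n : ℝ) = k + (n - k : ℕ) := by
      rw [Nat.cast_sub (mem_range_succ_iff.mp hk)]; ring
    rcases le_total k (n - k) with h | h
    · have := h22Weight_mul_inv_mul_inv_le k.cast_nonneg (Nat.cast_le.mpr h)
      rw [← hn] at this
      linarith [hd (n - k)]
    · have := h22Weight_mul_inv_mul_inv_le (n - k : ℕ).cast_nonneg (Nat.cast_le.mpr h)
      rw [add_comm, ← hn, mul_comm (h22Weight _)⁻¹] at this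
      linarith [hd k]
  calc h22Weight n * ∑ k ∈ range (n + 1), (h22Weight k)⁻¹ * (h22Weight (n - k : ℕ))⁻¹
      ≤ ∑ k ∈ range (n + 1), 11 * (d k + d (n - k)) := by
        rw [mul_sum]; exact sum_le_sum hterm
    _ = 22 * ∑ k ∈ range (n + 1), d k := by
        have := sum_range_reflect d (n + 1)
        simp only [add_tsub_cancel_right] at this
        rw [← mul_sum, sum_add_distrib, this]; ring
    _ ≤ 11 / 32 := by linarith [sum_range_cubeTail_sub_le (n + 1)]

lemma riemannZeta_four_sub_five_re :
    (riemannZeta 4 - riemannZeta 5).re = ∑' n : ℕ, (1 / (n : ℝ) ^ 4 - 1 / (n : ℝ) ^ 5) := by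
  have hre : ∀ {k : ℕ}, 1 < k → (riemannZeta k).re = ∑' n : ℕ, 1 / (n : ℝ) ^ k := by
    intro k hk
    rw [zeta_nat_eq_tsum_of_gt_one hk, ← Complex.ofReal_re (∑' n : ℕ, 1 / (n : ℝ) ^ k),
      Complex.ofReal_tsum]
    push_cast
    rfl
  rw [Complex.sub_re, ← Nat.cast_ofNat, hre (by norm_num), ← Nat.cast_ofNat (n := 5),
    hre (by norm_num), Summable.tsum_sub (Real.summable_one_div_nat_pow.mpr (by norm_num))
    (Real.summable_one_div_nat_pow.mpr (by norm_num))]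

lemma le_riemannZeta_four_sub_five_re : 11 / 256 ≤ (riemannZeta 4 - riemannZeta 5).re := by
  have hnn : ∀ n : ℕ, 0 ≤ 1 / (n : ℝ) ^ 4 - 1 / (n : ℝ) ^ 5 := by
    intro n
    rcases n.eq_zero_or_pos with rfl | hn
    · simp
    · rw [sub_nonneg]
      gcongr
      · exact_mod_cast hn
      · norm_num
  rw [riemannZeta_four_sub_five_re]
  refine le_trans ?_ (Summable.sum_le_tsum (range 6) (fun n _ => hnn n)
    ((Real.summable_one_div_nat_pow.mpr (by norm_num)).sub
      (Real.summable_one_div_nat_pow.mpr (by norm_num))))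
  norm_num [sum_range_succ]

theorem stmt11 (a b : ℕ → ℂ) (ha : Hmem a) (hb : Hmem b) :
    Hmem (cmul a b) ∧
    Real.sqrt (hnorm2 (cmul a b)) ≤
      2 * Real.sqrt 2 * Real.sqrt ((riemannZeta 4 - riemannZeta 5).re) *
        Real.sqrt (hnorm2 a) * Real.sqrt (hnorm2 b) := by
  obtain ⟨hc, hle⟩ := summable_weighted_cmul_and_tsum_le (w := fun n => h22Weight n)
    (fun n => h22Weight_pos n.cast_nonneg) h22Weight_mul_sum_inv_mul_inv_le ha hb
  refine ⟨hc, ?_⟩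
  set Z := (riemannZeta 4 - riemannZeta 5).re
  have hZ : 11 / 32 ≤ 8 * Z := by linarith [le_riemannZeta_four_sub_five_re]
  have hnorm2_nonneg : ∀ c, 0 ≤ hnorm2 c := fun c =>
    tsum_nonneg fun n => mul_nonneg (h22Weight_pos n.cast_nonneg).le (sq_nonneg _)
  have hAB := mul_nonneg (hnorm2_nonneg a) (hnorm2_nonneg b)
  calc √(hnorm2 (cmul a b)) ≤ √(8 * Z * (hnorm2 a * hnorm2 b)) :=
        Real.sqrt_le_sqrt (hle.trans (mul_le_mul_of_nonneg_right hZ hAB))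
    _ = 2 * √2 * √Z * √(hnorm2 a) * √(hnorm2 b) := by
        rw [show (8 : ℝ) = 2 ^ 2 * 2 by norm_num, Real.sqrt_mul' _ hAB,
          Real.sqrt_mul' _ (hnorm2_nonneg b), Real.sqrt_mul' _ (by linarith),
          Real.sqrt_mul' _ (by norm_num), Real.sqrt_sq (by norm_num)]
        ring
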